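/- arXiv:2202.01440 — 5 statements merged into one kernel-verified Lean document; each statement's English description precedes it below -/
import Mathlib

section
/- Let V > 0, T a positive integer, and v ∈ [0, V]. Define the quantization map q(x) = (V/T)·⌊(T·x + v)/V⌋. Then for every x ∈ [0, V], |x - q(x)| ≤ max(v, V - v)/T. -/
theorem stmt_4 (V : ℝ) (hV : 0 < V) (T : ℕ) (hT : 1 ≤ T) (v : ℝ) (hv : v ∈ Set.Icc 0 V)
    (q : ℝ → ℝ) (hq : ∀ x, q x = (V / T) * ⌊(T * x + v) / V⌋)
    (x : ℝ) (hx : x ∈ Set.Icc 0 V) :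
    |x - q x| ≤ max v (V - v) / T := by
  obtain ⟨hv0, hvV⟩ := hv
  have hT' : (0:ℝ) < T := by exact_mod_cast Nat.pos_of_ne_zero (by omega)
  set f : ℤ := ⌊(T * x + v) / V⌋ with hf
  have h1 : (f:ℝ) * V ≤ T * x + v := by
    have := Int.floor_le ((T * x + v) / V)
    rwa [le_div_iff₀ hV] at this
  have h2 : T * x + v < ((f:ℝ) + 1) * V := by
    have := Int.lt_floor_add_one ((T * x + v) / V)
    rwa [div_lt_iff₀ hV] at this
  rw [hq]
  have heq : x - V / T * f = (T * x - V * f) / T := by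
    field_simp
  rw [heq, abs_div, abs_of_pos hT']
  gcongr
  rw [abs_le]
  constructor
  · have := le_max_left v (V - v)
    nlinarith
  · have := le_max_right v (V - v)
    nlinarith
end

section
/- For a soft-reset IF neuron with threshold V > 0, initial potential v(0) ∈ [0, V], and inputs I(t) ∈ [0, V] for all t, the firing rate r(T) = (1/T)∑_{t=1}^T s(t) satisfies |r(T) - (1/(TV))∑_{t=1}^T I(t)| ≤ 1/T for all T ≥ 1. -/
/-!
Summing the reset equation over `t = 1, …, T` telescopes to
`V · ∑ s(t) = ∑ I(t) + v(0) - v(T)`. Since both potentials lie in `[0, V]`, the spike count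
and the normalised input differ by at most one, and dividing by `T` gives the bound.
-/

open Finset

lemma sum_Icc_one_eq_sub_of_succ {M : Type*} [AddCommGroup M] {f d : ℕ → M}
    (h : ∀ t, 1 ≤ t → f t = f (t - 1) + d t) (n : ℕ) :
    ∑ t ∈ Icc 1 n, d t = f n - f 0 := by
  induction n with
  | zero => simp
  | succ n ih =>
    rw [sum_Icc_succ_top (Nat.le_add_left 1 n), ih, h (n + 1) (Nat.le_add_left 1 n),
      Nat.add_sub_cancel]
    abel

lemma softReset_mem_Icc {V x i : ℝ} (hx : x ∈ Set.Icc 0 V) (hi : i ∈ Set.Icc 0 V) :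
    x + i - (if V < x + i then 1 else 0) * V ∈ Set.Icc 0 V := by
  obtain ⟨hx0, hxV⟩ := hx
  obtain ⟨hi0, hiV⟩ := hi
  split_ifs with h
  · constructor <;> linarith
  · constructor <;> linarith

section IFNeuron

variable {V : ℝ} {v I s : ℕ → ℝ}

lemma IFNeuron.potential_mem_Icc
    (hs : ∀ t, 1 ≤ t → s t = if V < v (t - 1) + I t then 1 else 0)
    (hv : ∀ t, 1 ≤ t → v t = v (t - 1) + I t - s t * V)
    (hv0 : v 0 ∈ Set.Icc 0 V) (hI : ∀ t, I t ∈ Set.Icc 0 V) (t : ℕ) :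
    v t ∈ Set.Icc 0 V := by
  induction t with
  | zero => exact hv0
  | succ n ih =>
    have ht : 1 ≤ n + 1 := Nat.le_add_left 1 n
    rw [hv _ ht, hs _ ht, Nat.add_sub_cancel]
    exact softReset_mem_Icc ih (hI _)

lemma IFNeuron.sum_input_sub_spikes (hv : ∀ t, 1 ≤ t → v t = v (t - 1) + I t - s t * V)
    (T : ℕ) :
    ∑ t ∈ Icc 1 T, I t - (∑ t ∈ Icc 1 T, s t) * V = v T - v 0 := by
  rw [sum_mul, ← sum_sub_distrib]
  exact sum_Icc_one_eq_sub_of_succ (fun t ht ↦ by rw [hv t ht]; ring) T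

end IFNeuron

theorem stmt_11_general (V : ℝ) (hV : 0 < V) (v I s : ℕ → ℝ)
    (hs : ∀ t, 1 ≤ t → s t = if V < v (t - 1) + I t then 1 else 0)
    (hv : ∀ t, 1 ≤ t → v t = v (t - 1) + I t - s t * V)
    (hv0 : 0 ≤ v 0 ∧ v 0 ≤ V)
    (hI : ∀ t, 0 ≤ I t ∧ I t ≤ V)
    (T : ℕ) :
    |(1 / T : ℝ) * (∑ t ∈ Finset.Icc 1 T, s t) -
        (1 / (T * V)) * ∑ t ∈ Finset.Icc 1 T, I t| ≤ 1 / T := by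
  have hvT := IFNeuron.potential_mem_Icc hs hv hv0 hI T
  have hgap : |v 0 - v T| ≤ V := abs_sub_le_of_nonneg_of_le hv0.1 hv0.2 hvT.1 hvT.2
  have hbalance := IFNeuron.sum_input_sub_spikes hv T
  have hrate : (1 / T : ℝ) * (∑ t ∈ Icc 1 T, s t) - (1 / (T * V)) * ∑ t ∈ Icc 1 T, I t
      = (v 0 - v T) / (T * V) := by
    rw [show v 0 - v T = (∑ t ∈ Icc 1 T, s t) * V - ∑ t ∈ Icc 1 T, I t by linarith, sub_div,
      mul_div_mul_right _ _ hV.ne']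
    ring
  calc _ = |v 0 - v T| / (T * V) := by
        rw [hrate, abs_div, abs_of_nonneg (by positivity : (0 : ℝ) ≤ T * V)]
    _ ≤ V / (T * V) := by gcongr
    _ = 1 / T := by rw [div_mul_cancel_right₀ hV.ne', one_div]

theorem stmt_11 (V : ℝ) (hV : 0 < V) (v I s : ℕ → ℝ)
    (hs : ∀ t, 1 ≤ t → s t = if V < v (t - 1) + I t then 1 else 0)
    (hv : ∀ t, 1 ≤ t → v t = v (t - 1) + I t - s t * V)
    (hv0 : 0 ≤ v 0 ∧ v 0 ≤ V)
    (hI : ∀ t, 0 ≤ I t ∧ I t ≤ V)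
    (T : ℕ) (hT : 1 ≤ T) :
    |(1 / T : ℝ) * (∑ t ∈ Finset.Icc 1 T, s t) -
        (1 / (T * V)) * ∑ t ∈ Finset.Icc 1 T, I t| ≤ 1 / T :=
  stmt_11_general V hV v I s hs hv hv0 hI T
end

section
/- Let X be a real random variable whose distribution is uniform on each interval [m_t, m_{t+1}] with density p_t, where m_0 = 0, m_{T+1} = V, m_t = (tV - v)/T for 1 ≤ t ≤ T, v ∈ [0, V], and p_0 = p_T. Then E[X - (V/T)·⌊(T·X + v)/V⌋] = (∑_{j=0}^{T-1} p_j) · ((V - v)^2 - v^2)/(2T^2). -/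
/-!
On the piece `(m t, m (t+1))` of the density the floor equals `t`, so the integrand is
`x - t V / T`. Each interior piece has length `V / T` and is shifted by `-v / T` against the
grid `t V / T`, so it contributes `((V - v)^2 - v^2) / (2 T^2)`; the two boundary pieces
contribute `(V - v)^2 / (2 T^2)` and `-v^2 / (2 T^2)`, which combine to one interior
contribution because `p 0 = p T`.
-/

open MeasureTheory
open scoped ENNReal

namespace MeasureTheory

variable {α : Type*} [MeasurableSpace α] {μ : Measure α}

theorem withDensity_finsetSum {ι : Type*} (s : Finset ι) {f : ι → α → ℝ≥0∞}
    (hf : ∀ i ∈ s, Measurable (f i)) :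
    μ.withDensity (∑ i ∈ s, f i) = ∑ i ∈ s, μ.withDensity (f i) := by
  ext t ht
  simp only [withDensity_apply _ ht, Measure.coe_finsetSum, Finset.sum_apply]
  exact lintegral_finsetSum' _ fun i hi => (hf i hi).aemeasurable

theorem withDensity_sum_indicator_const {ι : Type*} (s : Finset ι) {I : ι → Set α}
    (hI : ∀ i ∈ s, MeasurableSet (I i)) (c : ι → ℝ≥0∞) :
    μ.withDensity (fun x => ∑ i ∈ s, (I i).indicator (fun _ => c i) x) =
      ∑ i ∈ s, c i • μ.restrict (I i) := by
  have hfun : (fun x => ∑ i ∈ s, (I i).indicator (fun _ => c i) x)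
      = ∑ i ∈ s, (I i).indicator (fun _ => c i) := by ext x; simp
  rw [hfun, withDensity_finsetSum s fun i hi => measurable_const.indicator (hI i hi)]
  refine Finset.sum_congr rfl fun i hi => ?_
  rw [withDensity_indicator (hI i hi), withDensity_const]

theorem integral_sum_ofReal_smul_restrict {ι : Type*} (s : Finset ι) {I : ι → Set α}
    {p : ι → ℝ} (hp : ∀ i ∈ s, 0 ≤ p i) {g : α → ℝ} (hg : ∀ i ∈ s, IntegrableOn g (I i) μ) :
    ∫ x, g x ∂(∑ i ∈ s, ENNReal.ofReal (p i) • μ.restrict (I i)) =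
      ∑ i ∈ s, p i * ∫ x in I i, g x ∂μ := by
  rw [integral_finsetSum_measure fun i hi => (hg i hi).smul_measure ENNReal.ofReal_ne_top]
  refine Finset.sum_congr rfl fun i hi => ?_
  rw [integral_smul_measure, ENNReal.toReal_ofReal (hp i hi), smul_eq_mul]

end MeasureTheory

theorem setIntegral_Ioo_sub_const {a b : ℝ} (hab : a ≤ b) (c : ℝ) :
    ∫ x in Set.Ioo a b, (x - c) = ((b - c) ^ 2 - (a - c) ^ 2) / 2 := by
  rw [← integral_Ioc_eq_integral_Ioo, ← intervalIntegral.integral_of_le hab,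
    intervalIntegral.integral_comp_sub_right (fun x => x) c, integral_id]

noncomputable def sawtooth (V T v x : ℝ) : ℝ := x - V / T * ⌊(T * x + v) / V⌋

theorem measurable_sawtooth (V T v : ℝ) : Measurable (sawtooth V T v) :=
  measurable_id.sub ((measurable_from_top.comp
    (((measurable_id.const_mul T).add_const v).div_const V).floor).const_mul (V / T))

theorem sawtooth_eq_of_mem_Ico {V T v x : ℝ} (hV : 0 < V) (hT : 0 < T) {t : ℤ}
    (hx : x ∈ Set.Ico ((t * V - v) / T) (((t + 1) * V - v) / T)) :
    sawtooth V T v x = x - t * V / T := by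
  obtain ⟨hlo, hhi⟩ := hx
  rw [div_le_iff₀ hT] at hlo
  rw [lt_div_iff₀ hT] at hhi
  have hfloor : ⌊(T * x + v) / V⌋ = t := by
    rw [Int.floor_eq_iff, le_div_iff₀ hV, div_lt_iff₀ hV]
    constructor <;> linarith
  rw [sawtooth, hfloor]
  ring

theorem integrableOn_sawtooth_Ioo {V T v a b : ℝ} (hV : 0 < V) (hT : 0 < T) {t : ℤ}
    (hab : Set.Ioo a b ⊆ Set.Ico ((t * V - v) / T) (((t + 1) * V - v) / T)) :
    IntegrableOn (sawtooth V T v) (Set.Ioo a b) := by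
  refine IntegrableOn.congr_fun ?_ (fun x hx => (sawtooth_eq_of_mem_Ico hV hT (hab hx)).symm)
    measurableSet_Ioo
  exact (continuous_id.sub continuous_const).integrableOn_Icc.mono_set Set.Ioo_subset_Icc_self

theorem setIntegral_sawtooth_Ioo {V T v a b : ℝ} (hV : 0 < V) (hT : 0 < T) {t : ℤ}
    (hle : a ≤ b) (hab : Set.Ioo a b ⊆ Set.Ico ((t * V - v) / T) (((t + 1) * V - v) / T)) :
    ∫ x in Set.Ioo a b, sawtooth V T v x = ((b - t * V / T) ^ 2 - (a - t * V / T) ^ 2) / 2 := by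
  rw [setIntegral_congr_fun measurableSet_Ioo fun x hx => sawtooth_eq_of_mem_Ico hV hT (hab hx),
    setIntegral_Ioo_sub_const hle]

theorem breakpoint_bounds {V v : ℝ} (hv : v ∈ Set.Icc 0 V) {T : ℕ} (hT : 1 ≤ T) {m : ℕ → ℝ}
    (hm0 : m 0 = 0) (hmTop : m (T + 1) = V) (hm : ∀ t, 1 ≤ t → t ≤ T → m t = (t * V - v) / T)
    {t : ℕ} (ht : t ≤ T) :
    (t * V - v) / T ≤ m t ∧ m t ≤ m (t + 1) ∧ m (t + 1) ≤ ((t + 1) * V - v) / T := by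
  obtain ⟨hv0, hvV⟩ := hv
  have hT0 : (0 : ℝ) < T := by exact_mod_cast hT
  have hlo : (t * V - v) / T ≤ m t := by
    rcases Nat.eq_zero_or_pos t with rfl | ht0
    · rw [hm0]; apply div_nonpos_of_nonpos_of_nonneg <;> simp [hv0, hT0.le]
    · rw [hm t ht0 ht]
  have hhi : m (t + 1) ≤ ((t + 1) * V - v) / T := by
    rcases ht.lt_or_eq with htT | rfl
    · rw [hm (t + 1) (by omega) htT]; push_cast; rfl
    · rw [hmTop, le_div_iff₀ hT0]; nlinarith
  refine ⟨hlo, ?_, hhi⟩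
  rcases Nat.eq_zero_or_pos t with rfl | ht0
  · rw [hm0, hm 1 le_rfl hT]; push_cast; apply div_nonneg <;> linarith
  rcases ht.lt_or_eq with htT | rfl
  · rw [hm t ht0 ht, hm (t + 1) (by omega) htT]; gcongr ?_ / _; push_cast; linarith
  · rw [hm t ht0 le_rfl, hmTop, div_le_iff₀ hT0]; nlinarith

theorem sum_breakpoint_integrals {V v : ℝ} {T : ℕ} (hT : 1 ≤ T) {m : ℕ → ℝ}
    (hm0 : m 0 = 0) (hmTop : m (T + 1) = V) (hm : ∀ t, 1 ≤ t → t ≤ T → m t = (t * V - v) / T)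
    {p : ℕ → ℝ} (hp0T : p 0 = p T) :
    ∑ t ∈ Finset.range (T + 1),
        p t * (((m (t + 1) - t * V / T) ^ 2 - (m t - t * V / T) ^ 2) / 2) =
      (∑ j ∈ Finset.range T, p j) * (((V - v) ^ 2 - v ^ 2) / (2 * T ^ 2)) := by
  obtain ⟨S, rfl⟩ : ∃ S, T = S + 1 := ⟨T - 1, by omega⟩
  have hT0 : ((S + 1 : ℕ) : ℝ) ≠ 0 := by positivity
  have hinner : ∀ i ∈ Finset.range S,
      p (i + 1) * (((m (i + 1 + 1) - (i + 1 : ℕ) * V / (S + 1 : ℕ)) ^ 2 -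
        (m (i + 1) - (i + 1 : ℕ) * V / (S + 1 : ℕ)) ^ 2) / 2) =
      p (i + 1) * (((V - v) ^ 2 - v ^ 2) / (2 * (S + 1 : ℕ) ^ 2)) := by
    intro i hi
    have hiS := Finset.mem_range.mp hi
    rw [hm (i + 1) (by omega) (by omega), hm (i + 1 + 1) (by omega) (by omega)]
    field_simp
    push_cast
    ring
  rw [Finset.sum_range_succ, Finset.sum_range_succ', Finset.sum_congr rfl hinner,
    Finset.sum_range_succ' p, hm0, hm 1 le_rfl (by omega), hm (S + 1) (by omega) le_rfl, hmTop,
    ← hp0T, ← Finset.sum_mul]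
  generalize ∑ i ∈ Finset.range S, p (i + 1) = P
  field_simp
  push_cast
  ring

theorem stmt_17_general {Ω : Type*} [MeasureSpace Ω]
    (V : ℝ) (hV : 0 < V) (T : ℕ) (hT : 1 ≤ T) (v : ℝ) (hv : v ∈ Set.Icc 0 V)
    (m : ℕ → ℝ) (hm0 : m 0 = 0) (hmTop : m (T + 1) = V)
    (hm : ∀ t, 1 ≤ t → t ≤ T → m t = (t * V - v) / T)
    (p : ℕ → ℝ) (hp : ∀ t, 0 ≤ p t) (hp0T : p 0 = p T)
    (X : Ω → ℝ) (hXm : Measurable X)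
    (hlaw : Measure.map X (volume : Measure Ω) =
      volume.withDensity (fun x => ∑ t ∈ Finset.range (T + 1),
        Set.indicator (Set.Ioo (m t) (m (t + 1))) (fun _ => ENNReal.ofReal (p t)) x)) :
    (∫ ω : Ω, (X ω - (V / T) * ⌊(T * X ω + v) / V⌋) ∂(volume : Measure Ω)) =
      (∑ j ∈ Finset.range T, p j) * (((V - v) ^ 2 - v ^ 2) / (2 * T ^ 2)) := by
  have hT0 : (0 : ℝ) < T := by exact_mod_cast hT
  have hpiece : ∀ t ∈ Finset.range (T + 1), m t ≤ m (t + 1) ∧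
      Set.Ioo (m t) (m (t + 1)) ⊆ Set.Ico (((t : ℤ) * V - v) / T) ((((t : ℤ) + 1) * V - v) / T) := by
    intro t ht
    obtain ⟨hlo, hle, hhi⟩ :=
      breakpoint_bounds hv hT hm0 hmTop hm (Finset.mem_range_succ_iff.mp ht)
    push_cast
    exact ⟨hle, Set.Ioo_subset_Ico_self.trans (Set.Ico_subset_Ico hlo hhi)⟩
  rw [withDensity_sum_indicator_const _ (fun _ _ => measurableSet_Ioo)] at hlaw
  change ∫ ω, sawtooth V T v (X ω) = _
  rw [← integral_map hXm.aemeasurable (measurable_sawtooth V T v).aestronglyMeasurable, hlaw,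
    integral_sum_ofReal_smul_restrict _ (fun t _ => hp t)
      fun t ht => integrableOn_sawtooth_Ioo hV hT0 (hpiece t ht).2,
    Finset.sum_congr rfl fun t ht => by
      rw [setIntegral_sawtooth_Ioo hV hT0 (hpiece t ht).1 (hpiece t ht).2, Int.cast_natCast]]
  exact sum_breakpoint_integrals hT hm0 hmTop hm hp0T

theorem stmt_17 {Ω : Type*} [MeasureSpace Ω] [IsProbabilityMeasure (volume : Measure Ω)]
    (V : ℝ) (hV : 0 < V) (T : ℕ) (hT : 1 ≤ T) (v : ℝ) (hv : v ∈ Set.Icc 0 V)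
    (m : ℕ → ℝ) (hm0 : m 0 = 0) (hmTop : m (T + 1) = V)
    (hm : ∀ t, 1 ≤ t → t ≤ T → m t = (t * V - v) / T)
    (p : ℕ → ℝ) (hp : ∀ t, 0 ≤ p t) (hp0T : p 0 = p T)
    (X : Ω → ℝ) (hXm : Measurable X)
    (hlaw : Measure.map X (volume : Measure Ω) =
      volume.withDensity (fun x => ∑ t ∈ Finset.range (T + 1),
        Set.indicator (Set.Ioo (m t) (m (t + 1))) (fun _ => ENNReal.ofReal (p t)) x)) :
    (∫ ω : Ω, (X ω - (V / T) * ⌊(T * X ω + v) / V⌋) ∂(volume : Measure Ω)) =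
      (∑ j ∈ Finset.range T, p j) * (((V - v) ^ 2 - v ^ 2) / (2 * T ^ 2)) :=
  stmt_17_general V hV T hT v hv m hm0 hmTop hm p hp hp0T X hXm hlaw
end

section
/- Let X be as in the piecewise-uniform model (density p_t on [m_t, m_{t+1}], m_t = (tV - v)/T, p_0 = p_T). Then E[(X - (V/T)·⌊(T·X + v)/V⌋)^2] = (∑_{j=0}^{T-1} p_j) · ((V - v)^3 + v^3)/(3T^3), and as a function of v ∈ [0, V] this is minimized uniquely at v = V/2, where also E[X - (V/T)·⌊(T·X + v)/V⌋] = 0. -/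
/-!
On the piece `(m t, m (t + 1))` the SNN output is the constant `V t / T`, so there the error is
`x - V t / T`, which sweeps `(-v / T, (V - v) / T)` on an interior piece. The first piece only
sweeps `(0, (V - v) / T)` and the last only `(-v / T, 0)`; since `p 0 = p T` they add up to one
full piece. Hence the `n`-th moment of the error is
`S (((V - v) / T) ^ (n + 1) - (-v / T) ^ (n + 1)) / (n + 1)` with `S = ∑_{t < T} p t`:
`n = 2` gives the formula, `n = 1` vanishes at `v = V / 2`, and
`(V - u) ^ 3 + u ^ 3 = V ^ 3 / 4 + 3 V (u - V / 2) ^ 2`.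
-/

open MeasureTheory Set Finset

theorem integral_sub_pow (a b c : ℝ) (n : ℕ) :
    ∫ x in a..b, (x - c) ^ n = ((b - c) ^ (n + 1) - (a - c) ^ (n + 1)) / (n + 1) := by
  rw [intervalIntegral.integral_comp_sub_right (· ^ n), integral_pow]

theorem withDensity_finsetSum {α ι : Type*} [MeasurableSpace α] (μ : Measure α) (s : Finset ι)
    {f : ι → α → ENNReal} (hf : ∀ i ∈ s, Measurable (f i)) :
    μ.withDensity (fun x => ∑ i ∈ s, f i x) = ∑ i ∈ s, μ.withDensity (f i) := by
  induction s using Finset.cons_induction_on with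
  | empty => simp
  | cons i s hi ih =>
    rw [Finset.forall_mem_cons] at hf
    simp_rw [Finset.sum_cons]
    rw [← ih hf.2]
    exact withDensity_add_left hf.1 _

theorem integral_comp_eq_sum_setIntegral {Ω α ι : Type*} [MeasurableSpace Ω]
    [MeasurableSpace α] {μ : Measure Ω} {ν : Measure α} {X : Ω → α}
    (hX : AEMeasurable X μ) {I : Finset ι} {s : ι → Set α}
    (hs : ∀ i ∈ I, MeasurableSet (s i)) {p : ι → ℝ} (hp : ∀ i ∈ I, 0 ≤ p i)
    (hlaw : μ.map X = ν.withDensity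
      (fun x => ∑ i ∈ I, (s i).indicator (fun _ => ENNReal.ofReal (p i)) x))
    {f : α → ℝ} (hf : Measurable f) (hfi : ∀ i ∈ I, IntegrableOn f (s i) ν) :
    ∫ ω, f (X ω) ∂μ = ∑ i ∈ I, p i * ∫ x in s i, f x ∂ν := by
  have hlaw' : μ.map X = ∑ i ∈ I, ENNReal.ofReal (p i) • ν.restrict (s i) := by
    rw [hlaw, withDensity_finsetSum _ _ fun i hi => measurable_const.indicator (hs i hi)]
    refine Finset.sum_congr rfl fun i hi => ?_
    rw [withDensity_indicator (hs i hi), withDensity_const]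
  rw [← integral_map hX hf.aestronglyMeasurable, hlaw', integral_finsetSum_measure]
  · refine Finset.sum_congr rfl fun i hi => ?_
    rw [integral_smul_measure, ENNReal.toReal_ofReal (hp i hi), smul_eq_mul]
  · exact fun i hi => (hfi i hi).smul_measure ENNReal.ofReal_ne_top

theorem setIntegral_Ioo_eq_intervalIntegral {f g : ℝ → ℝ} {a b : ℝ} (hab : a ≤ b)
    (hfg : EqOn f g (Ioo a b)) : ∫ x in Ioo a b, f x = ∫ x in a..b, g x := by
  rw [setIntegral_congr_fun measurableSet_Ioo hfg, ← integral_Ioc_eq_integral_Ioo,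
    intervalIntegral.integral_of_le hab]

theorem integrableOn_Ioo_of_eqOn {f g : ℝ → ℝ} {a b : ℝ} (hg : Continuous g)
    (hfg : EqOn f g (Ioo a b)) : IntegrableOn f (Ioo a b) :=
  ((hg.integrableOn_Icc).mono_set Ioo_subset_Icc_self).congr_fun hfg.symm measurableSet_Ioo

theorem sum_range_succ_mul_truncated_sub {R : Type*} [CommRing R] {T : ℕ} {p : ℕ → R}
    (hp : p 0 = p T) (F : R → R) (hF : F 0 = 0) (a b : R) :
    ∑ t ∈ range (T + 1), p t * (F (if t = T then 0 else a) - F (if t = 0 then 0 else b)) =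
      (∑ t ∈ range T, p t) * (F a - F b) := by
  have hshift : ∑ t ∈ range T, p (t + 1) = ∑ t ∈ range T, p t := by
    have h := (sum_range_succ' p T).symm.trans (sum_range_succ p T)
    rw [hp] at h
    exact add_right_cancel h
  have hupper :
      ∑ t ∈ range T, p t * F (if t = T then 0 else a) = (∑ t ∈ range T, p t) * F a := by
    rw [sum_mul]
    exact sum_congr rfl fun t ht => by rw [if_neg (mem_range.1 ht).ne]
  simp only [mul_sub, sum_sub_distrib]
  rw [sum_range_succ, sum_range_succ' (fun t => p t * F (if t = 0 then 0 else b)), hupper,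
    ← hshift]
  simp [hF, sum_mul]

/-- The mean output over `T` time steps of an integrate-and-fire neuron with threshold `V` and
initial membrane potential `v`, driven by the constant input `x ∈ [0, V]`. -/
noncomputable def snnOutput (V : ℝ) (T : ℕ) (v x : ℝ) : ℝ := V / T * ⌊(T * x + v) / V⌋

@[fun_prop]
theorem measurable_snnOutput (V : ℝ) (T : ℕ) (v : ℝ) : Measurable (snnOutput V T v) := by
  unfold snnOutput
  fun_prop

theorem snnOutput_eq_of_mem_Ico {V : ℝ} {T : ℕ} {v x : ℝ} {t : ℤ} (hV : 0 < V)
    (hT : T ≠ 0) (hx : x ∈ Ico ((t * V - v) / T) (((t + 1) * V - v) / T)) :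
    snnOutput V T v x = V * t / T := by
  have hT' : (0 : ℝ) < T := by positivity
  obtain ⟨hlo, hhi⟩ := hx
  rw [div_le_iff₀ hT'] at hlo
  rw [lt_div_iff₀ hT'] at hhi
  have hfloor : ⌊(T * x + v) / V⌋ = t := by
    rw [Int.floor_eq_iff, le_div_iff₀ hV, div_lt_iff₀ hV]
    constructor <;> linarith
  rw [snnOutput, hfloor, div_mul_eq_mul_div, mul_comm (V : ℝ)]

/-- `m 1 < ⋯ < m T` are the jump points of `snnOutput V T v`, and `m 0 = 0`, `m (T + 1) = V`
close the partition of `[0, V]`. -/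
structure IsThresholdPartition (V : ℝ) (T : ℕ) (v : ℝ) (m : ℕ → ℝ) : Prop where
  zero : m 0 = 0
  top : m (T + 1) = V
  level : ∀ t, 1 ≤ t → t ≤ T → m t = (t * V - v) / T

namespace IsThresholdPartition

variable {V : ℝ} {T : ℕ} {v : ℝ} {m : ℕ → ℝ}

theorem left_sub (h : IsThresholdPartition V T v m) {t : ℕ} (ht : t ≤ T) :
    m t - V * t / T = if t = 0 then 0 else -(v / T) := by
  split_ifs with h0
  · simp [h0, h.zero]
  · rw [h.level t (Nat.one_le_iff_ne_zero.2 h0) ht]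
    ring

theorem right_sub (h : IsThresholdPartition V T v m) (hT : T ≠ 0) {t : ℕ} (ht : t ≤ T) :
    m (t + 1) - V * t / T = if t = T then 0 else (V - v) / T := by
  split_ifs with hTt
  · rw [hTt, h.top, mul_div_cancel_right₀ _ (Nat.cast_ne_zero.2 hT), sub_self]
  · rw [h.level (t + 1) (by omega) (by omega)]
    push_cast
    ring

theorem le_succ (h : IsThresholdPartition V T v m) (hT : T ≠ 0) (hv : v ∈ Icc 0 V) {t : ℕ}
    (ht : t ≤ T) : m t ≤ m (t + 1) := by
  have hl := h.left_sub ht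
  have hr := h.right_sub hT ht
  have : 0 ≤ v / T := div_nonneg hv.1 T.cast_nonneg
  have : 0 ≤ (V - v) / T := div_nonneg (sub_nonneg.2 hv.2) T.cast_nonneg
  split_ifs at hl hr <;> linarith

theorem Ioo_subset_Ico (h : IsThresholdPartition V T v m) (hT : T ≠ 0) (hv : v ∈ Icc 0 V)
    {t : ℕ} (ht : t ≤ T) :
    Ioo (m t) (m (t + 1)) ⊆ Ico ((t * V - v) / T) (((t + 1) * V - v) / T) := by
  have hl := h.left_sub ht
  have hr := h.right_sub hT ht
  have : 0 ≤ v / T := div_nonneg hv.1 T.cast_nonneg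
  have : 0 ≤ (V - v) / T := div_nonneg (sub_nonneg.2 hv.2) T.cast_nonneg
  have hlo : (t * V - v) / T = V * t / T - v / T := by ring
  have hhi : ((t + 1) * V - v) / T = V * t / T + (V - v) / T := by ring
  rintro x ⟨hx1, hx2⟩
  rw [hlo, hhi]
  constructor <;> split_ifs at hl hr <;> linarith

theorem snnOutput_eq (h : IsThresholdPartition V T v m) (hV : 0 < V) (hT : T ≠ 0)
    (hv : v ∈ Icc 0 V) {t : ℕ} (ht : t ≤ T) :
    EqOn (snnOutput V T v) (fun _ => V * t / T) (Ioo (m t) (m (t + 1))) := fun x hx => by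
  have hx' := h.Ioo_subset_Ico hT hv ht hx
  exact_mod_cast snnOutput_eq_of_mem_Ico hV hT (t := t) (by exact_mod_cast hx')

end IsThresholdPartition

theorem integral_sub_snnOutput_pow {Ω : Type*} [MeasurableSpace Ω] {μ : Measure Ω} {V : ℝ}
    {T : ℕ} {v : ℝ} {m p : ℕ → ℝ} (hV : 0 < V) (hT : T ≠ 0) (hv : v ∈ Icc 0 V)
    (hm : IsThresholdPartition V T v m) (hp : ∀ t, 0 ≤ p t) (hp0T : p 0 = p T) {X : Ω → ℝ}
    (hX : AEMeasurable X μ)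
    (hlaw : μ.map X = volume.withDensity (fun x => ∑ t ∈ range (T + 1),
      (Ioo (m t) (m (t + 1))).indicator (fun _ => ENNReal.ofReal (p t)) x)) (n : ℕ) :
    ∫ ω, (X ω - snnOutput V T v (X ω)) ^ n ∂μ =
      (∑ t ∈ range T, p t) *
        ((((V - v) / T) ^ (n + 1) - (-(v / T)) ^ (n + 1)) / (n + 1)) := by
  have hpiece : ∀ t ∈ range (T + 1), EqOn (fun x => (x - snnOutput V T v x) ^ n)
      (fun x => (x - V * t / T) ^ n) (Ioo (m t) (m (t + 1))) := fun t ht x hx => by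
    dsimp only
    rw [hm.snnOutput_eq hV hT hv (mem_range_succ_iff.1 ht) hx]
  rw [integral_comp_eq_sum_setIntegral hX (fun _ _ => measurableSet_Ioo) (fun t _ => hp t) hlaw
    (by fun_prop) fun t ht => integrableOn_Ioo_of_eqOn (by fun_prop) (hpiece t ht),
    sub_div, ← sum_range_succ_mul_truncated_sub hp0T (fun y => y ^ (n + 1) / (n + 1)) (by simp)]
  refine sum_congr rfl fun t ht => ?_
  have ht' := mem_range_succ_iff.1 ht
  rw [setIntegral_Ioo_eq_intervalIntegral (hm.le_succ hT hv ht') (hpiece t ht),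
    integral_sub_pow, ← hm.right_sub hT ht', ← hm.left_sub ht', sub_div]

theorem sub_pow_three_add_pow_three (V u : ℝ) :
    (V - u) ^ 3 + u ^ 3 = (V - V / 2) ^ 3 + (V / 2) ^ 3 + 3 * V * (u - V / 2) ^ 2 := by
  ring

theorem stmt_18_general {Ω : Type*} [MeasureSpace Ω]
    (V : ℝ) (hV : 0 < V) (T : ℕ) (hT : 1 ≤ T) (v : ℝ) (hv : v ∈ Set.Icc 0 V)
    (m : ℕ → ℝ) (hm0 : m 0 = 0) (hmTop : m (T + 1) = V)
    (hm : ∀ t, 1 ≤ t → t ≤ T → m t = (t * V - v) / T)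
    (p : ℕ → ℝ) (hp : ∀ t, 0 < p t) (hp0T : p 0 = p T)
    (X : Ω → ℝ) (hXm : Measurable X)
    (hlaw : Measure.map X (volume : Measure Ω) =
      volume.withDensity (fun x => ∑ t ∈ Finset.range (T + 1),
        Set.indicator (Set.Ioo (m t) (m (t + 1))) (fun _ => ENNReal.ofReal (p t)) x)) :
    (∫ ω : Ω, (X ω - (V / T) * ⌊(T * X ω + v) / V⌋) ^ 2 ∂(volume : Measure Ω)) =
        (∑ j ∈ Finset.range T, p j) * (((V - v) ^ 3 + v ^ 3) / (3 * T ^ 3)) ∧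
      (∀ u ∈ Set.Icc (0 : ℝ) V,
          (∑ j ∈ Finset.range T, p j) * (((V - V / 2) ^ 3 + (V / 2) ^ 3) / (3 * T ^ 3)) ≤
            (∑ j ∈ Finset.range T, p j) * (((V - u) ^ 3 + u ^ 3) / (3 * T ^ 3)) ∧
          ((∑ j ∈ Finset.range T, p j) * (((V - u) ^ 3 + u ^ 3) / (3 * T ^ 3)) =
              (∑ j ∈ Finset.range T, p j) * (((V - V / 2) ^ 3 + (V / 2) ^ 3) / (3 * T ^ 3)) →
            u = V / 2)) ∧
      (v = V / 2 →
        (∫ ω : Ω, (X ω - (V / T) * ⌊(T * X ω + v) / V⌋) ∂(volume : Measure Ω)) = 0) := by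
  have hT0 : T ≠ 0 := Nat.one_le_iff_ne_zero.1 hT
  have hS : 0 < ∑ j ∈ range T, p j := sum_pos (fun j _ => hp j) (nonempty_range_iff.2 hT0)
  have hc : (0 : ℝ) < 3 * T ^ 3 := by positivity
  have hmoment := integral_sub_snnOutput_pow hV hT0 hv ⟨hm0, hmTop, hm⟩ (fun t => (hp t).le)
    hp0T hXm.aemeasurable hlaw
  refine ⟨(hmoment 2).trans ?_, fun u _ => ⟨?_, fun heq => ?_⟩, fun hv2 => ?_⟩
  · push_cast
    ring
  · refine mul_le_mul_of_nonneg_left (div_le_div_of_nonneg_right ?_ hc.le) hS.le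
    nlinarith [sub_pow_three_add_pow_three V u, sq_nonneg (u - V / 2)]
  · rw [mul_right_inj' hS.ne', div_left_inj' hc.ne', sub_pow_three_add_pow_three V u] at heq
    simpa [hV.ne', sub_eq_zero] using heq
  · have hmean := hmoment 1
    simp only [pow_one] at hmean
    refine hmean.trans ?_
    rw [hv2]
    ring

theorem stmt_18 {Ω : Type*} [MeasureSpace Ω] [IsProbabilityMeasure (volume : Measure Ω)]
    (V : ℝ) (hV : 0 < V) (T : ℕ) (hT : 1 ≤ T) (v : ℝ) (hv : v ∈ Set.Icc 0 V)
    (m : ℕ → ℝ) (hm0 : m 0 = 0) (hmTop : m (T + 1) = V)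
    (hm : ∀ t, 1 ≤ t → t ≤ T → m t = (t * V - v) / T)
    (p : ℕ → ℝ) (hp : ∀ t, 0 < p t) (hp0T : p 0 = p T)
    (X : Ω → ℝ) (hXm : Measurable X)
    (hlaw : Measure.map X (volume : Measure Ω) =
      volume.withDensity (fun x => ∑ t ∈ Finset.range (T + 1),
        Set.indicator (Set.Ioo (m t) (m (t + 1))) (fun _ => ENNReal.ofReal (p t)) x)) :
    (∫ ω : Ω, (X ω - (V / T) * ⌊(T * X ω + v) / V⌋) ^ 2 ∂(volume : Measure Ω)) =
        (∑ j ∈ Finset.range T, p j) * (((V - v) ^ 3 + v ^ 3) / (3 * T ^ 3)) ∧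
      (∀ u ∈ Set.Icc (0 : ℝ) V,
          (∑ j ∈ Finset.range T, p j) * (((V - V / 2) ^ 3 + (V / 2) ^ 3) / (3 * T ^ 3)) ≤
            (∑ j ∈ Finset.range T, p j) * (((V - u) ^ 3 + u ^ 3) / (3 * T ^ 3)) ∧
          ((∑ j ∈ Finset.range T, p j) * (((V - u) ^ 3 + u ^ 3) / (3 * T ^ 3)) =
              (∑ j ∈ Finset.range T, p j) * (((V - V / 2) ^ 3 + (V / 2) ^ 3) / (3 * T ^ 3)) →
            u = V / 2)) ∧
      (v = V / 2 →
        (∫ ω : Ω, (X ω - (V / T) * ⌊(T * X ω + v) / V⌋) ∂(volume : Measure Ω)) = 0) :=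
  stmt_18_general V hV T hT v hv m hm0 hmTop hm p hp hp0T X hXm hlaw
end

section
/- Let a, W, b be real numbers and define the ANN activation z = max(W·a + b, 0). Let the SNN output with threshold V > 0, horizon T ≥ 1, and initial potential v ∈ [0, V] be ẑ = max((V/T)·⌊(T·(W·a + b) + v)/V⌋, 0). If 0 ≤ W·a + b ≤ V, then |z - ẑ| ≤ max(v, V - v)/T; in particular with v = V/2, |z - ẑ| ≤ V/(2T), so the single-layer conversion error tends to 0 as T → ∞. -/
theorem stmt_19 (a W b : ℝ) (V : ℝ) (hV : 0 < V) (T : ℕ) (hT : 1 ≤ T)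
    (v : ℝ) (hv : v ∈ Set.Icc 0 V)
    (z zhat : ℝ) (hz : z = max (W * a + b) 0)
    (hzhat : zhat = max ((V / T) * ⌊(T * (W * a + b) + v) / V⌋) 0)
    (hrange : 0 ≤ W * a + b ∧ W * a + b ≤ V) :
    |z - zhat| ≤ max v (V - v) / T ∧ (v = V / 2 → |z - zhat| ≤ V / (2 * T)) := by
  obtain ⟨hx0, hxV⟩ := hrange
  obtain ⟨hv0, hvV⟩ := hv
  set x : ℝ := W * a + b with hxdef
  have hT' : (1:ℝ) ≤ (T:ℝ) := by exact_mod_cast hT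
  have hTpos : (0:ℝ) < T := by linarith
  set n : ℤ := ⌊(T * x + v) / V⌋ with hndef
  have harg : 0 ≤ (T * x + v) / V :=
    div_nonneg (by nlinarith) hV.le
  have hn0 : (0:ℝ) ≤ (n:ℝ) := by
    exact_mod_cast Int.floor_nonneg.mpr harg
  have hfl : (n:ℝ) ≤ (T * x + v) / V := Int.floor_le _
  have hfu : (T * x + v) / V < (n:ℝ) + 1 := Int.lt_floor_add_one _
  have h1 : V * (n:ℝ) ≤ T * x + v := by
    have := (le_div_iff₀ hV).mp hfl
    linarith
  have h2 : T * x + v < V * ((n:ℝ) + 1) := by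
    rw [div_lt_iff₀ hV] at hfu
    linarith [hfu]
  have hz' : z = x := by rw [hz]; exact max_eq_left hx0
  have hzhat' : zhat = V / T * (n:ℝ) := by
    rw [hzhat]
    exact max_eq_left (mul_nonneg (by positivity) hn0)
  have hdiff : z - zhat = (T * x - V * n) / T := by
    rw [hz', hzhat']; field_simp
  have hlb : -v ≤ T * x - V * n := by linarith
  have hub : T * x - V * n ≤ V - v := by linarith
  have hmain : |z - zhat| ≤ max v (V - v) / T := by
    rw [hdiff, abs_div, abs_of_pos hTpos]
    gcongr
    rw [abs_le]
    constructor
    · have := le_max_left v (V - v); linarith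
    · have := le_max_right v (V - v); linarith
  refine ⟨hmain, fun hveq => ?_⟩
  have : max v (V - v) = V / 2 := by rw [hveq]; simp
  calc |z - zhat| ≤ max v (V - v) / T := hmain
    _ = V / (2 * T) := by rw [this]; ring
end
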